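/- arXiv:1903.06589 — 2 statements merged into one kernel-verified Lean document; each statement's English description precedes it below -/
import Mathlib

section
/- The map φ_2 : S_n → S_{n+1} defined by φ_2(σ) = (σ^{-1})^{(n,1)} satisfies cr(φ_2(σ)) = cr(σ) + 1 − δ_{n,σ(n)}, i.e. cr(φ_2(σ)) = cr(σ) if σ(n) = n and cr(φ_2(σ)) = cr(σ)+1 otherwise. -/
open Finset Polynomial

/-- A crossing of a permutation of [n] (0-based encoding of the 1-based definition):
`i < j < σ(i) < σ(j)` or `σ(i) < σ(j) ≤ i < j` (1-based). -/
def IsCross {n : ℕ} (σ : Equiv.Perm (Fin n)) (i j : Fin n) : Prop :=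
  (i < j ∧ (j : ℕ) < (σ i : ℕ) ∧ σ i < σ j) ∨
  (σ i < σ j ∧ (σ j : ℕ) ≤ (i : ℕ) ∧ i < j)

instance {n : ℕ} (σ : Equiv.Perm (Fin n)) (i j : Fin n) : Decidable (IsCross σ i j) := by
  unfold IsCross; infer_instance

/-- the number of crossings -/
def cr {n : ℕ} (σ : Equiv.Perm (Fin n)) : ℕ :=
  (Finset.univ.filter (fun p : Fin n × Fin n => IsCross σ p.1 p.2)).card

/-- occurrence of a length-3 pattern -/
def Contains3 {n : ℕ} (σ : Equiv.Perm (Fin n)) (τ : Fin 3 → Fin 3) : Prop :=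
  ∃ i j l : Fin n, i < j ∧ j < l ∧
    (τ 0 < τ 1 ↔ σ i < σ j) ∧ (τ 0 < τ 2 ↔ σ i < σ l) ∧ (τ 1 < τ 2 ↔ σ j < σ l)

instance {n : ℕ} (σ : Equiv.Perm (Fin n)) (τ : Fin 3 → Fin 3) :
    Decidable (Contains3 σ τ) := by
  unfold Contains3; infer_instance

def Avoids {n : ℕ} (σ : Equiv.Perm (Fin n)) (τ : Fin 3 → Fin 3) : Prop := ¬ Contains3 σ τ

instance {n : ℕ} (σ : Equiv.Perm (Fin n)) (τ : Fin 3 → Fin 3) : Decidable (Avoids σ τ) := by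
  unfold Avoids; infer_instance

def p123 : Fin 3 → Fin 3 := ![0, 1, 2]
def p132 : Fin 3 → Fin 3 := ![0, 2, 1]
def p213 : Fin 3 → Fin 3 := ![1, 0, 2]
def p231 : Fin 3 → Fin 3 := ![1, 2, 0]
def p312 : Fin 3 → Fin 3 := ![2, 0, 1]
def p321 : Fin 3 → Fin 3 := ![2, 1, 0]

/-!
Let `p` be the position `n - 1` (0-based) where `φ σ` takes the value `0`. Away from `p`, `φ σ` is
`σ⁻¹` shifted up by one, read through `p.succAbove`, which moves only the last position. The shift
turns the strict `b < σ a` into `b + 1 ≤ σ a`, so a crossing `(a, b)` of `σ` of one kind becomes a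
crossing `(σ a, σ b)` of `φ σ` of the other kind, and every crossing of `φ σ` avoiding `p` arises
this way. A crossing through `p` must be `(p, n)`, and it occurs iff `σ⁻¹` moves the last point.
-/

open Equiv Fin

variable {n : ℕ}

theorem cr_eq_sum (σ : Perm (Fin n)) : cr σ = ∑ i, ∑ j, if IsCross σ i j then 1 else 0 := by
  rw [cr, card_filter, Fintype.sum_prod_type]

theorem IsCross.val_apply_right_pos {π : Perm (Fin n)} {i j : Fin n} (h : IsCross π i j) :
    0 < (π j : ℕ) := by
  unfold IsCross at h
  simp only [Fin.lt_def] at h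
  omega

theorem val_castSucc_last_succAbove (x : Fin (n + 1)) :
    ((last n).castSucc.succAbove x : ℕ) = if x = last n then n + 1 else x := by
  split_ifs with hx
  · simp [hx]
  · rw [succAbove_castSucc_of_lt _ _ (lt_last_iff_ne_last.mpr hx), val_castSucc]

theorem isCross_castSucc_last_iff {π : Perm (Fin (n + 2))} (hp : (π (last n).castSucc : ℕ) = 0)
    (j : Fin (n + 2)) :
    IsCross π (last n).castSucc j ↔ j = last (n + 1) ∧ (π (last (n + 1)) : ℕ) ≤ n := by
  have hj := j.isLt
  unfold IsCross
  simp only [Fin.lt_def, val_castSucc, val_last, hp]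
  constructor
  · rintro (h | h)
    · omega
    · obtain rfl : j = last (n + 1) := Fin.ext (by rw [val_last]; omega)
      exact ⟨rfl, h.2.1⟩
  · rintro ⟨rfl, h⟩
    have hpos : 0 < (π (last (n + 1)) : ℕ) := by
      rw [Nat.pos_iff_ne_zero, ← hp, Ne, ← Fin.ext_iff, π.injective.eq_iff, Fin.ext_iff]
      simp
    simp only [val_last]
    omega

section InverseInsertion

variable {σ : Perm (Fin (n + 1))} {π : Perm (Fin (n + 2))}

theorem isCross_succAbove_apply_iff
    (hπ : ∀ x, (π ((last n).castSucc.succAbove x) : ℕ) = σ.symm x + 1) (a b : Fin (n + 1)) :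
    IsCross π ((last n).castSucc.succAbove (σ a)) ((last n).castSucc.succAbove (σ b)) ↔
      IsCross σ a b := by
  have hab : (σ a : ℕ) = σ b → (a : ℕ) = b := fun h => by
    rw [σ.injective (Fin.ext h)]
  have ha := a.isLt
  have hb := b.isLt
  unfold IsCross
  simp only [Fin.lt_def, hπ, symm_apply_apply, val_castSucc_last_succAbove, Fin.ext_iff,
    val_last]
  split_ifs <;> omega

-- `hπ` and `hp` say that `π = (σ⁻¹)^{(n + 1, 1)}` in the 1-based notation of the paper.
theorem cr_eq_of_succAbove_eq_symm_add_one
    (hπ : ∀ x, (π ((last n).castSucc.succAbove x) : ℕ) = σ.symm x + 1)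
    (hp : (π (last n).castSucc : ℕ) = 0) :
    cr π = if σ (last n) = last n then cr σ else cr σ + 1 := by
  set p := (last n).castSucc
  have hrow : (∑ j, if IsCross π p j then 1 else 0) = if σ (last n) = last n then 0 else 1 := by
    have hπ_last : (π (last (n + 1)) : ℕ) = σ.symm (last n) + 1 := by
      simpa [p] using hπ (last n)
    have hfix : σ.symm (last n) = last n ↔ σ (last n) = last n := by
      rw [σ.symm_apply_eq, eq_comm]
    simp only [p, isCross_castSucc_last_iff hp, hπ_last, ite_and, sum_ite_eq', mem_univ, if_true]
    simp_rw [← hfix, Fin.ext_iff, val_last]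
    have := (σ.symm (last n)).isLt
    split_ifs <;> omega
  have hcol : ∀ i, (if IsCross π i p then 1 else 0) = 0 := fun i =>
    if_neg fun h => h.val_apply_right_pos.ne' hp
  calc cr π
      = (∑ j, if IsCross π p j then 1 else 0) +
          ∑ x, ∑ y, if IsCross π (p.succAbove x) (p.succAbove y) then 1 else 0 := by
        rw [cr_eq_sum, sum_univ_succAbove _ p]
        simp_rw [sum_univ_succAbove (fun j => if IsCross π (p.succAbove _) j then 1 else 0) p,
          hcol, zero_add]
    _ = (if σ (last n) = last n then 0 else 1) +
          ∑ a, ∑ b, if IsCross π (p.succAbove (σ a)) (p.succAbove (σ b)) then 1 else 0 := by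
        rw [hrow, ← Equiv.sum_comp σ]
        simp_rw [← Equiv.sum_comp σ
          (fun y => if IsCross π (p.succAbove _) (p.succAbove y) then 1 else 0)]
    _ = if σ (last n) = last n then cr σ else cr σ + 1 := by
        simp only [p, isCross_succAbove_apply_iff hπ, ← cr_eq_sum]
        split_ifs <;> omega

end InverseInsertion

/-- φ₂ : σ ↦ (σ⁻¹)^{(n,1)} satisfies cr(φ₂ σ) = cr σ + 1 − δ_{n,σ(n)}. -/
theorem stmt9 (n : ℕ) (hn : 1 ≤ n) (φ : Equiv.Perm (Fin n) → Equiv.Perm (Fin (n + 1)))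
    (hφ : ∀ σ : Equiv.Perm (Fin n),
      (∀ i : Fin (n + 1), ∀ hi : (i : ℕ) < n - 1,
          (φ σ i : ℕ) = (σ.symm ⟨(i : ℕ), by omega⟩ : ℕ) + 1) ∧
      (φ σ ⟨n - 1, by omega⟩ : ℕ) = 0 ∧
      (φ σ ⟨n, by omega⟩ : ℕ) = (σ.symm ⟨n - 1, by omega⟩ : ℕ) + 1) :
    ∀ σ : Equiv.Perm (Fin n),
      cr (φ σ) = if (σ ⟨n - 1, by omega⟩ : ℕ) = n - 1 then cr σ else cr σ + 1 := by
  intro σ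
  obtain ⟨m, rfl⟩ : ∃ m, n = m + 1 := ⟨n - 1, by omega⟩
  obtain ⟨h_lt, h_zero, h_last⟩ := hφ σ
  have hπ : ∀ x, (φ σ ((last m).castSucc.succAbove x) : ℕ) = σ.symm x + 1 := by
    intro x
    rcases (le_last x).lt_or_eq with hx | rfl
    · rw [succAbove_castSucc_of_lt _ _ hx]
      exact h_lt _ (by simpa [Fin.lt_def] using hx)
    · rw [succAbove_castSucc_self]
      exact h_last
  rw [cr_eq_of_succAbove_eq_symm_add_one hπ h_zero]
  simp_rw [Fin.ext_iff]
  rfl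
end

section
/- Define polynomials R_n^k(q) by R_n^n = R_n^{n-1} = 1, R_n^k = q^{min(k-1, n-1-k)} R_{n-1}^k + R_n^{k+1} for 0 < k < n−1, and R_n^0 = R_{n-1}^0 + R_n^1. Then for all n ≥ 0, ∑_{σ ∈ S_n(213,312)} q^{cr(σ)} = R_n^0(q), and for all 1 ≤ k ≤ n, ∑_{σ ∈ S_n^{[k]}(213,312)} q^{cr(σ)} = R_n^k(q), where S_n^{[k]} is the set of σ ∈ S_n with σ(n+1−i) = i for all i ∈ [k]. -/
open Finset Polynomial

/-- The q-tableau of powers of two: `R n n = R n (n-1) = 1`,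
`R n k = q^{min(k-1, n-1-k)} R (n-1) k + R n (k+1)` for `0 < k < n-1`, and
`R n 0 = R (n-1) 0 + R n 1`. -/
noncomputable def R : ℕ → ℕ → Polynomial ℤ
  | n, k =>
    if n ≤ k + 1 then 1
    else if k = 0 then R (n - 1) 0 + R n 1
    else Polynomial.X ^ (min (k - 1) (n - 1 - k)) * R (n - 1) k + R n (k + 1)
  termination_by n k => (n, n - k)
  decreasing_by
  · apply Prod.Lex.left; omega
  · apply Prod.Lex.right' <;> omega
  · apply Prod.Lex.left; omega
  · apply Prod.Lex.right' <;> omega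

/-!
A permutation avoids 213 and 312 iff it has no valley `σ j < σ i, σ j < σ l` with `i < j < l`,
i.e. iff it increases up to the value `n - 1` and then decreases. It is determined by the set
`S ⊆ {0, …, n - 2}` of values after the maximum (its non-left-to-right maxima): with
`s = #{u ∈ S | u < v}`, the value `v` sits at position `v - s` if `v ∉ S` and at `n - 1 - s`
if `v ∈ S`. In this encoding a value `v ∈ S` is `σ i` for no crossing `(i, j)` and a value
`v ∉ S` for exactly `min (s - 1) (n - 1 - v)` of them, while `σ (n - 1 - i) = i` for `i < k`
says `{0, …, k - 1} ⊆ S`. The recursion for `R n k` is the split of these sets `S` by whether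
`k ∈ S`: if not, deleting `k` and shifting the larger elements down removes
`min (k - 1) (n - 1 - k)` crossings.
-/

def numBelow (S : Finset ℕ) (v : ℕ) : ℕ := #(S.filter (· < v))

def unimodalPos (n : ℕ) (S : Finset ℕ) (v : ℕ) : ℕ :=
  if v ∈ S then n - 1 - numBelow S v else v - numBelow S v

/-- Value `u` precedes value `v` in the unimodal arrangement whose decreasing tail is `S`. -/
def UnimodalLT (S : Finset ℕ) (u v : ℕ) : Prop :=
  u < v ∧ u ∉ S ∨ v < u ∧ v ∈ S

section numBelow
variable {S : Finset ℕ} {u v : ℕ}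

lemma numBelow_le_self (S : Finset ℕ) (v : ℕ) : numBelow S v ≤ v := by
  have : S.filter (· < v) ⊆ range v := fun w hw => mem_range.mpr (mem_filter.mp hw).2
  exact (card_le_card this).trans_eq (card_range v)

lemma numBelow_mono (S : Finset ℕ) (h : u ≤ v) : numBelow S u ≤ numBelow S v :=
  card_le_card (monotone_filter_right S fun _ _ hw => lt_of_lt_of_le hw h)

lemma numBelow_lt_numBelow (hu : u ∈ S) (h : u < v) : numBelow S u < numBelow S v :=
  card_lt_card <| (ssubset_iff_of_subset (monotone_filter_right S fun _ _ hw => hw.trans h)).2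
    ⟨u, by simp [hu, h], by simp⟩

lemma numBelow_le_card (S : Finset ℕ) (v : ℕ) : numBelow S v ≤ #S :=
  card_le_card (filter_subset _ S)

lemma numBelow_lt_card (hv : v ∈ S) : numBelow S v < #S :=
  card_lt_card <| (ssubset_iff_of_subset (filter_subset _ S)).2 ⟨v, hv, by simp⟩

lemma numBelow_eq_card {m : ℕ} (hS : S ⊆ range m) : numBelow S m = #S := by
  rw [numBelow, filter_true_of_mem fun w hw => mem_range.mp (hS hw)]

lemma numBelow_eq_self (hv : range v ⊆ S) : numBelow S v = v := by
  have : S.filter (· < v) = range v := by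
    ext w
    simp only [mem_filter, mem_range]
    exact ⟨And.right, fun h => ⟨hv (mem_range.mpr h), h⟩⟩
  rw [numBelow, this, card_range]

lemma numBelow_add_one_le (hu : u ∉ S) (h : u < v) :
    numBelow S v + 1 ≤ numBelow S u + (v - u) := by
  have hsub : S.filter (· < v) ⊆ S.filter (· < u) ∪ Ioo u v := by
    intro w hw
    simp only [mem_filter, mem_union, mem_Ioo] at hw ⊢
    rcases lt_trichotomy w u with h | rfl | h
    · exact .inl ⟨hw.1, h⟩
    · exact absurd hw.1 hu
    · exact .inr ⟨h, hw.2⟩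
  have := (card_le_card hsub).trans (card_union_le _ _)
  simp only [Nat.card_Ioo] at this
  unfold numBelow; omega

end numBelow

section unimodalPos
variable {n : ℕ} {S : Finset ℕ} {u v : ℕ}

lemma unimodalPos_lt (hv : v < n) : unimodalPos n S v < n := by
  unfold unimodalPos; split <;> omega

lemma unimodalPos_le_of_notMem (hS : S ⊆ range (n - 1)) (hu : u ∉ S) (hun : u < n) :
    unimodalPos n S u ≤ n - 1 - #S := by
  rw [unimodalPos, if_neg hu, ← numBelow_eq_card hS]
  have := numBelow_le_self S u
  rcases (show u = n - 1 ∨ u < n - 1 by omega) with rfl | h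
  · rfl
  · have := numBelow_add_one_le hu h; omega

lemma le_unimodalPos_of_mem (hv : v ∈ S) : n - #S ≤ unimodalPos n S v := by
  rw [unimodalPos, if_pos hv]; have := numBelow_lt_card hv; omega

lemma UnimodalLT.asymm (h : UnimodalLT S u v) : ¬ UnimodalLT S v u := by
  unfold UnimodalLT at *
  rcases h with ⟨h1, h2⟩ | ⟨h1, h2⟩ <;> rintro (⟨h3, h4⟩ | ⟨h3, h4⟩) <;>
    first | omega | contradiction

lemma unimodalLT_or_unimodalLT (S : Finset ℕ) (h : u ≠ v) :
    UnimodalLT S u v ∨ UnimodalLT S v u := by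
  unfold UnimodalLT
  rcases lt_or_gt_of_ne h with h | h
  · by_cases hu : u ∈ S
    · exact .inr (.inr ⟨h, hu⟩)
    · exact .inl (.inl ⟨h, hu⟩)
  · by_cases hv : v ∈ S
    · exact .inl (.inr ⟨h, hv⟩)
    · exact .inr (.inl ⟨h, hv⟩)

lemma UnimodalLT.unimodalPos_lt (hS : S ⊆ range (n - 1)) (hu : u < n) (hv : v < n)
    (h : UnimodalLT S u v) : unimodalPos n S u < unimodalPos n S v := by
  have hcard : #S ≤ n - 1 := by simpa using card_le_card hS
  rcases h with ⟨huv, hu'⟩ | ⟨hvu, hv'⟩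
  · by_cases hvS : v ∈ S
    · have := unimodalPos_le_of_notMem hS hu' hu
      have := le_unimodalPos_of_mem (n := n) hvS
      omega
    · have := numBelow_add_one_le hu' huv
      have := numBelow_le_self S u
      rw [unimodalPos, unimodalPos, if_neg hu', if_neg hvS]; omega
  · by_cases huS : u ∈ S
    · have := numBelow_lt_numBelow hv' hvu
      have := numBelow_lt_card huS
      rw [unimodalPos, unimodalPos, if_pos hv', if_pos huS]; omega
    · have := unimodalPos_le_of_notMem hS huS hu
      have := le_unimodalPos_of_mem (n := n) hv'
      omega

lemma unimodalPos_lt_unimodalPos_iff (hS : S ⊆ range (n - 1)) (hu : u < n) (hv : v < n) :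
    unimodalPos n S u < unimodalPos n S v ↔ UnimodalLT S u v := by
  refine ⟨fun h => ?_, UnimodalLT.unimodalPos_lt hS hu hv⟩
  refine (unimodalLT_or_unimodalLT S (by rintro rfl; exact h.false)).resolve_right fun h' => ?_
  exact (h'.unimodalPos_lt hS hv hu).asymm h

lemma unimodalPos_injOn (hS : S ⊆ range (n - 1)) : Set.InjOn (unimodalPos n S) (range n) := by
  intro u hu v hv h
  by_contra hne
  simp only [coe_range, Set.mem_Iio] at hu hv
  rcases unimodalLT_or_unimodalLT S hne with h' | h'
  · exact (h'.unimodalPos_lt hS hu hv).ne h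
  · exact (h'.unimodalPos_lt hS hv hu).ne' h

lemma image_unimodalPos (hS : S ⊆ range (n - 1)) :
    (range n).image (unimodalPos n S) = range n :=
  eq_of_subset_of_card_le
    (fun _ hp => by
      obtain ⟨v, hv, rfl⟩ := mem_image.mp hp
      exact mem_range.mpr (unimodalPos_lt (mem_range.mp hv)))
    (card_image_of_injOn (unimodalPos_injOn hS)).ge

lemma card_filter_unimodalPos (hS : S ⊆ range (n - 1)) (P : ℕ → Prop) [DecidablePred P] :
    #{b ∈ range n | P (unimodalPos n S b)} = #{p ∈ range n | P p} := by
  conv_rhs => rw [← image_unimodalPos hS, filter_image]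
  exact (card_image_of_injOn ((unimodalPos_injOn hS).mono (filter_subset _ _))).symm

end unimodalPos

section crossings
variable {n : ℕ} {S : Finset ℕ} {a b : ℕ}

/-- After a value `a ∉ S` come first the larger values and then, closing the arrangement, the
`numBelow S a` members of `S` below `a`. -/
lemma lt_iff_of_notMem (hS : S ⊆ range (n - 1)) (ha : a ∉ S) (han : a < n) (hbn : b < n) :
    a < b ↔ unimodalPos n S a < unimodalPos n S b ∧ unimodalPos n S b < n - numBelow S a := by
  rw [unimodalPos_lt_unimodalPos_iff hS han hbn]
  constructor
  · intro hab
    refine ⟨.inl ⟨hab, ha⟩, ?_⟩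
    have := numBelow_le_self S a
    by_cases hbS : b ∈ S
    · have := numBelow_mono S hab.le
      rw [unimodalPos, if_pos hbS]; omega
    · have := unimodalPos_le_of_notMem hS hbS hbn
      have := numBelow_le_card S a
      omega
  · rintro ⟨⟨hab, -⟩ | ⟨hba, hbS⟩, hb⟩
    · exact hab
    · have := numBelow_lt_numBelow hbS hba
      rw [unimodalPos, if_pos hbS] at hb; omega

lemma card_crossingPartners (hS : S ⊆ range (n - 1)) (ha : a < n) :
    #{b ∈ range n | unimodalPos n S a < unimodalPos n S b ∧ unimodalPos n S b < a ∧ a < b ∨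
        a < b ∧ b ≤ unimodalPos n S a ∧ unimodalPos n S a < unimodalPos n S b}
      = if a ∈ S then 0 else min (numBelow S a - 1) (n - 1 - a) := by
  split_ifs with haS
  · refine card_eq_zero.mpr (filter_eq_empty_iff.mpr fun b hb => ?_)
    have key : a < b → unimodalPos n S b < unimodalPos n S a := fun hab =>
      UnimodalLT.unimodalPos_lt hS (mem_range.mp hb) ha (.inr ⟨hab, haS⟩)
    omega
  · set s := numBelow S a
    have hpos : unimodalPos n S a = a - s := by rw [unimodalPos, if_neg haS]
    have hs := numBelow_le_self S a
    rw [filter_congr (q := fun b => unimodalPos n S a < unimodalPos n S b ∧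
        unimodalPos n S b < min a (n - s)) fun b hb => by
      have := lt_iff_of_notMem hS haS ha (mem_range.mp hb); omega]
    have hIoo :
        {p ∈ range n | a - s < p ∧ p < min a (n - s)} = Ioo (a - s) (min a (n - s)) := by
      ext p; simp only [mem_filter, mem_range, mem_Ioo]; omega
    rw [card_filter_unimodalPos hS (fun p => unimodalPos n S a < p ∧ p < min a (n - s)), hpos,
      hIoo, Nat.card_Ioo]
    omega

end crossings

lemma Fin.equiv_eq_of_lt_iff {α : Type*} {n : ℕ} (r : α → α → Prop) {σ τ : Fin n ≃ α}
    (hσ : ∀ i j, i < j ↔ r (σ i) (σ j)) (hτ : ∀ i j, i < j ↔ r (τ i) (τ j)) :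
    σ = τ := by
  let f : Fin n ≃o Fin n := OrderIso.ofRelIsoLT
    { toEquiv := τ.trans σ.symm
      map_rel_iff' := fun {i j} => by
        change σ.symm (τ i) < σ.symm (τ j) ↔ i < j
        rw [hσ, hτ, σ.apply_symm_apply, σ.apply_symm_apply] }
  ext i
  have : σ.symm (τ i) = i := DFunLike.congr_fun (Subsingleton.elim f (OrderIso.refl _)) i
  exact (congrArg σ this).symm.trans (σ.apply_symm_apply _)

lemma avoids_p213_and_avoids_p312_iff {n : ℕ} {σ : Equiv.Perm (Fin n)} :
    Avoids σ p213 ∧ Avoids σ p312 ↔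
      ∀ i j l, i < j → j < l → ¬ (σ j < σ i ∧ σ j < σ l) := by
  conv_lhs =>
    simp only [Avoids, Contains3, p213, p312, Fin.isValue, Matrix.cons_val_zero,
      Matrix.cons_val_one, Matrix.cons_val, Fin.reduceLT, Fin.lt_one_iff, Fin.reduceEq, not_lt_zero,
      zero_lt_one, false_iff, true_iff, not_lt, exists_and_left, not_exists, not_and]
  constructor
  · rintro ⟨h213, h312⟩ i j l hij hjl ⟨hji, hjl'⟩
    rcases lt_or_ge (σ i) (σ l) with h | h
    · exact (h213 i j hij l hjl hji.le h).not_gt hjl'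
    · exact (h312 i j hij l hjl hji.le h).not_gt hjl'
  · intro h
    have hlt : ∀ {i j}, i < j → σ j ≤ σ i → σ j < σ i := fun hij hji =>
      lt_of_le_of_ne hji (σ.injective.ne hij.ne')
    have hle : ∀ i j, i < j → ∀ l, j < l → σ j ≤ σ i → σ l ≤ σ j :=
      fun i j hij l hjl hji => not_lt.mp fun hjl' => h i j l hij hjl ⟨hlt hij hji, hjl'⟩
    exact ⟨fun i j hij l hjl hji _ => hle i j hij l hjl hji,
      fun i j hij l hjl hji _ => hle i j hij l hjl hji⟩

section unimodalPerm
variable {n : ℕ} {S : Finset ℕ}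

noncomputable def unimodalPerm (n : ℕ) (S : Finset ℕ) (hS : S ⊆ range (n - 1)) :
    Equiv.Perm (Fin n) :=
  (Equiv.ofBijective (fun v : Fin n => (⟨unimodalPos n S v, unimodalPos_lt v.isLt⟩ : Fin n))
    (Finite.injective_iff_bijective.mp fun u v h => Fin.ext <|
      unimodalPos_injOn hS (by simp) (by simp) (congrArg Fin.val h))).symm

variable (hS : S ⊆ range (n - 1))

lemma unimodalPerm_symm_apply (v : Fin n) :
    ((unimodalPerm n S hS).symm v : ℕ) = unimodalPos n S v := rfl

lemma unimodalPos_unimodalPerm (i : Fin n) : unimodalPos n S (unimodalPerm n S hS i) = i := by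
  rw [← unimodalPerm_symm_apply hS, Equiv.symm_apply_apply]

lemma lt_iff_unimodalLT_unimodalPerm (i j : Fin n) :
    i < j ↔ UnimodalLT S (unimodalPerm n S hS i) (unimodalPerm n S hS j) := by
  rw [← unimodalPos_lt_unimodalPos_iff hS (Fin.isLt _) (Fin.isLt _), unimodalPos_unimodalPerm,
    unimodalPos_unimodalPerm, Fin.lt_def]

lemma unimodalPerm_noValley (i j l : Fin n) (hij : i < j) (hjl : j < l) :
    ¬ (unimodalPerm n S hS j < unimodalPerm n S hS i ∧
      unimodalPerm n S hS j < unimodalPerm n S hS l) := by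
  rintro ⟨hji, hjl'⟩
  rcases (lt_iff_unimodalLT_unimodalPerm hS i j).mp hij with ⟨h, -⟩ | ⟨-, hmem⟩
  · exact h.not_gt hji
  rcases (lt_iff_unimodalLT_unimodalPerm hS j l).mp hjl with ⟨-, hnot⟩ | ⟨h, -⟩
  · exact hnot hmem
  · exact h.not_gt hjl'

lemma unimodalPerm_rev_eq_self_iff {k : ℕ} (hk : k ≤ n) :
    (∀ i : Fin n, (i : ℕ) < k → unimodalPerm n S hS (Fin.rev i) = i) ↔
      range (min k (n - 1)) ⊆ S := by
  have hrev (i : Fin n) :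
      unimodalPerm n S hS (Fin.rev i) = i ↔ unimodalPos n S i = n - 1 - i := by
    rw [← Equiv.eq_symm_apply, eq_comm, Fin.ext_iff, unimodalPerm_symm_apply, Fin.val_rev]
    omega
  constructor
  · intro h v hv
    induction v using Nat.strong_induction_on with
    | _ v ih =>
      rw [mem_range] at hv
      by_contra hvS
      have hbelow := numBelow_eq_self fun u hu => ih u (mem_range.mp hu) (by
        simp only [mem_range] at hu ⊢; omega)
      have := (hrev ⟨v, by omega⟩).mp (h ⟨v, by omega⟩ (show v < k by omega))
      simp only [unimodalPos, if_neg hvS, hbelow] at this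
      omega
  · intro hsub i hik
    rw [hrev]
    by_cases hi : (i : ℕ) < n - 1
    · have hbelow := numBelow_eq_self (v := i) fun u hu => hsub (by
        simp only [mem_range] at hu ⊢; omega)
      rw [unimodalPos, if_pos (hsub (mem_range.mpr (by omega))), hbelow]
    · have hbelow := numBelow_eq_self (S := S) (v := n - 1) fun u hu => hsub (by
        simp only [mem_range] at hu ⊢; omega)
      have hiS : (i : ℕ) ∉ S := fun h => hi (mem_range.mp (hS h))
      rw [unimodalPos, if_neg hiS, show (i : ℕ) = n - 1 by omega, hbelow]

end unimodalPerm

section nonLRMaxima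
variable {n : ℕ}

def nonLRMaxima (σ : Equiv.Perm (Fin n)) : Finset ℕ :=
  (univ.filter fun j => ∃ i < j, σ j < σ i).image fun j => (σ j : ℕ)

lemma val_mem_nonLRMaxima {σ : Equiv.Perm (Fin n)} {j : Fin n} :
    (σ j : ℕ) ∈ nonLRMaxima σ ↔ ∃ i < j, σ j < σ i := by
  simp [nonLRMaxima, Fin.val_inj]

lemma nonLRMaxima_subset (σ : Equiv.Perm (Fin n)) : nonLRMaxima σ ⊆ range (n - 1) := by
  intro v hv
  obtain ⟨j, hj, rfl⟩ := mem_image.mp hv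
  obtain ⟨i, -, hji⟩ := (mem_filter.mp hj).2
  have : (σ j : ℕ) < σ i := hji
  simp only [mem_range]; omega

lemma lt_iff_unimodalLT_nonLRMaxima {σ : Equiv.Perm (Fin n)}
    (hσ : ∀ i j l, i < j → j < l → ¬ (σ j < σ i ∧ σ j < σ l)) (i j : Fin n) :
    i < j ↔ UnimodalLT (nonLRMaxima σ) (σ i) (σ j) := by
  have hfwd : ∀ i j, i < j → UnimodalLT (nonLRMaxima σ) (σ i) (σ j) := by
    intro i j hij
    rcases lt_or_gt_of_ne (σ.injective.ne hij.ne) with h | h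
    · refine .inl ⟨h, fun hmem => ?_⟩
      obtain ⟨k, hki, hik⟩ := val_mem_nonLRMaxima.mp hmem
      exact hσ k i j hki hij ⟨hik, h⟩
    · exact .inr ⟨h, val_mem_nonLRMaxima.mpr ⟨i, hij, h⟩⟩
  refine ⟨hfwd i j, fun h => ?_⟩
  rcases lt_trichotomy i j with hij | rfl | hji
  · exact hij
  · exact absurd h h.asymm
  · exact absurd h (hfwd j i hji).asymm

lemma eq_unimodalPerm_nonLRMaxima {σ : Equiv.Perm (Fin n)}
    (hσ : ∀ i j l, i < j → j < l → ¬ (σ j < σ i ∧ σ j < σ l)) :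
    σ = unimodalPerm n (nonLRMaxima σ) (nonLRMaxima_subset σ) :=
  Fin.equiv_eq_of_lt_iff (fun u v : Fin n => UnimodalLT (nonLRMaxima σ) u v)
    (lt_iff_unimodalLT_nonLRMaxima hσ) (lt_iff_unimodalLT_unimodalPerm _)

lemma nonLRMaxima_unimodalPerm {S : Finset ℕ} (hS : S ⊆ range (n - 1)) :
    nonLRMaxima (unimodalPerm n S hS) = S := by
  set τ := unimodalPerm n S hS
  ext v
  constructor
  · intro hv
    obtain ⟨j, hj, rfl⟩ := mem_image.mp hv
    obtain ⟨i, hij, hji⟩ := (mem_filter.mp hj).2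
    rcases (lt_iff_unimodalLT_unimodalPerm hS i j).mp hij with ⟨h, -⟩ | ⟨-, hmem⟩
    · exact absurd hji (not_lt.mpr h.le)
    · exact hmem
  · intro hv
    have hvn : v < n - 1 := mem_range.mp (hS hv)
    obtain ⟨i, hi⟩ := τ.surjective ⟨n - 1, by omega⟩
    obtain ⟨j, hj⟩ := τ.surjective ⟨v, by omega⟩
    have hτ : ∀ i j, i < j ↔ UnimodalLT S (τ i) (τ j) := lt_iff_unimodalLT_unimodalPerm hS
    rw [show v = τ j by rw [hj], val_mem_nonLRMaxima]
    refine ⟨i, ?_, by rw [hi, hj]; exact hvn⟩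
    rw [hτ, hi, hj]
    exact .inr ⟨hvn, hv⟩

end nonLRMaxima

def crossStat (n : ℕ) (S : Finset ℕ) : ℕ :=
  ∑ v ∈ range n, if v ∈ S then 0 else min (numBelow S v - 1) (n - 1 - v)

lemma cr_eq_card_isCross_symm {n : ℕ} (σ : Equiv.Perm (Fin n)) :
    cr σ = #{p : Fin n × Fin n | IsCross σ (σ.symm p.1) (σ.symm p.2)} :=
  card_equiv (σ.prodCongr σ) fun p => by simp

lemma card_filter_fin_prod {n : ℕ} (P : ℕ → ℕ → Prop) [∀ a b, Decidable (P a b)] :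
    #{p : Fin n × Fin n | P p.1 p.2} = ∑ a ∈ range n, #{b ∈ range n | P a b} := by
  rw [card_filter, Fintype.sum_prod_type, ← Fin.sum_univ_eq_sum_range]
  refine sum_congr rfl fun a _ => ?_
  rw [card_filter, ← Fin.sum_univ_eq_sum_range (fun b => if P a b then 1 else 0)]

lemma cr_unimodalPerm {n : ℕ} {S : Finset ℕ} (hS : S ⊆ range (n - 1)) :
    cr (unimodalPerm n S hS) = crossStat n S := by
  rw [cr_eq_card_isCross_symm]
  simp only [IsCross, Equiv.apply_symm_apply, Fin.lt_def, unimodalPerm_symm_apply]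
  rw [card_filter_fin_prod fun a b => unimodalPos n S a < unimodalPos n S b ∧
    unimodalPos n S b < a ∧ a < b ∨
      a < b ∧ b ≤ unimodalPos n S a ∧ unimodalPos n S a < unimodalPos n S b]
  exact sum_congr rfl fun a ha => card_crossingPartners hS (mem_range.mp ha)

def skip (k : ℕ) : ℕ ↪o ℕ :=
  OrderEmbedding.ofStrictMono (fun x => if k ≤ x then x + 1 else x) fun a b h => by
    dsimp only; split_ifs <;> omega

lemma skip_apply (k x : ℕ) : skip k x = if k ≤ x then x + 1 else x := rfl

lemma skip_ne (k x : ℕ) : skip k x ≠ k := by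
  rw [skip_apply]; split_ifs <;> omega

lemma skip_mem_map_skip {S : Finset ℕ} {k v : ℕ} :
    skip k v ∈ S.map (skip k).toEmbedding ↔ v ∈ S :=
  mem_map' (skip k).toEmbedding

lemma numBelow_map_skip (S : Finset ℕ) (k v : ℕ) :
    numBelow (S.map (skip k).toEmbedding) (skip k v) = numBelow S v := by
  rw [numBelow, filter_map, card_map]
  simp only [Function.comp_def, RelEmbedding.coe_toEmbedding, OrderEmbedding.lt_iff_lt]
  rfl

lemma range_eq_insert_map_skip {n k : ℕ} (hk : k < n) :
    range n = insert k ((range (n - 1)).map (skip k).toEmbedding) := by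
  ext x
  simp only [mem_insert, mem_map, mem_range, RelEmbedding.coe_toEmbedding, skip_apply]
  constructor
  · intro hx
    rcases lt_trichotomy x k with h | rfl | h
    · exact .inr ⟨x, by omega, by rw [if_neg (by omega)]⟩
    · exact .inl rfl
    · exact .inr ⟨x - 1, by omega, by rw [if_pos (by omega)]; omega⟩
  · rintro (rfl | ⟨y, hy, rfl⟩)
    · exact hk
    · split_ifs <;> omega

lemma crossStat_map_skip {n k : ℕ} {S : Finset ℕ} (hkS : range k ⊆ S) (hkn : k + 1 < n) :
    crossStat n (S.map (skip k).toEmbedding) = min (k - 1) (n - 1 - k) + crossStat (n - 1) S := by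
  have hk : k ∉ S.map (skip k).toEmbedding := by simp [skip_ne]
  have hbelow : numBelow (S.map (skip k).toEmbedding) k = k := numBelow_eq_self fun u hu => by
    have hu := mem_range.mp hu
    exact mem_map.mpr ⟨u, hkS (mem_range.mpr hu), by simp [skip_apply, hu.not_ge]⟩
  unfold crossStat
  rw [range_eq_insert_map_skip (k := k) (by omega), sum_insert (by simp [skip_ne]), sum_map,
    if_neg hk, hbelow]
  congr 1
  refine sum_congr rfl fun v _ => ?_
  simp only [RelEmbedding.coe_toEmbedding, skip_mem_map_skip, numBelow_map_skip]
  split_ifs with hv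
  · rfl
  · have : k ≤ v := not_lt.mp fun h => hv (hkS (mem_range.mpr h))
    rw [skip_apply, if_pos this]
    omega

lemma exists_skip_eq {k x : ℕ} (hx : x ≠ k) : ∃ y, skip k y = x :=
  ⟨if k < x then x - 1 else x, by rw [skip_apply]; split_ifs <;> omega⟩

lemma powerset_filter_notMem_eq_map_skip {n k : ℕ} (hkn : k + 1 < n) :
    {T ∈ (range (n - 1)).powerset | range k ⊆ T ∧ k ∉ T} =
      {S ∈ (range (n - 1 - 1)).powerset | range k ⊆ S}.map
        ⟨fun S => S.map (skip k).toEmbedding, map_injective _⟩ := by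
  have hfix {u : ℕ} (hu : u < k) : skip k u = u := by rw [skip_apply, if_neg (by omega)]
  ext T
  simp only [mem_filter, mem_powerset, mem_map, Function.Embedding.coeFn_mk]
  constructor
  · rintro ⟨hT, hkT, hk⟩
    refine ⟨T.preimage (skip k) (skip k).injective.injOn,
      ⟨fun x hx => ?_, fun u hu => ?_⟩, ?_⟩
    · have := mem_range.mp (hT (mem_preimage.mp hx))
      rw [skip_apply] at this
      exact mem_range.mpr (by split_ifs at this <;> omega)
    · have hu := mem_range.mp hu
      exact mem_preimage.mpr ((hfix hu).symm ▸ hkT (mem_range.mpr hu))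
    · ext t
      simp only [mem_map, mem_preimage, RelEmbedding.coe_toEmbedding]
      constructor
      · rintro ⟨y, hy, rfl⟩; exact hy
      · intro ht
        obtain ⟨y, rfl⟩ := exists_skip_eq (k := k) fun h => hk (h ▸ ht)
        exact ⟨y, ht, rfl⟩
  · rintro ⟨S, ⟨hS, hkS⟩, rfl⟩
    refine ⟨fun t ht => ?_, fun u hu => ?_, by simp [skip_ne]⟩
    · obtain ⟨x, hx, rfl⟩ := mem_map.mp ht
      have := mem_range.mp (hS hx)
      simp only [RelEmbedding.coe_toEmbedding, skip_apply, mem_range]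
      split_ifs <;> omega
    · have hu := mem_range.mp hu
      exact mem_map.mpr ⟨u, hkS (mem_range.mpr hu), hfix hu⟩

noncomputable def subsetPoly (n k : ℕ) : ℤ[X] :=
  ∑ S ∈ (range (n - 1)).powerset with range (min k (n - 1)) ⊆ S, X ^ crossStat n S

lemma crossStat_range (n : ℕ) : crossStat n (range (n - 1)) = 0 :=
  sum_eq_zero fun v hv => by
    split_ifs with h
    · rfl
    · simp only [mem_range] at h hv; omega

lemma subsetPoly_of_le {n k : ℕ} (h : n ≤ k + 1) : subsetPoly n k = 1 := by
  have : {S ∈ (range (n - 1)).powerset | range (n - 1) ⊆ S} = {range (n - 1)} := by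
    ext S
    simp only [mem_filter, mem_powerset, mem_singleton]
    exact ⟨fun h => h.1.antisymm h.2, fun h => h ▸ ⟨subset_rfl, subset_rfl⟩⟩
  rw [subsetPoly, min_eq_right (by omega), this, sum_singleton, crossStat_range, pow_zero]

lemma subsetPoly_succ {n k : ℕ} (h : k + 1 < n) :
    subsetPoly n k = X ^ min (k - 1) (n - 1 - k) * subsetPoly (n - 1) k + subsetPoly n (k + 1) := by
  rw [subsetPoly, subsetPoly, subsetPoly, min_eq_left (by omega : k ≤ n - 1),
    min_eq_left (by omega : k + 1 ≤ n - 1), min_eq_left (by omega : k ≤ n - 1 - 1),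
    ← sum_filter_not_add_sum_filter _ (k ∈ ·), filter_filter, filter_filter,
    powerset_filter_notMem_eq_map_skip h, sum_map, mul_sum]
  congr 1
  · refine sum_congr rfl fun S hS => ?_
    rw [Function.Embedding.coeFn_mk, crossStat_map_skip (mem_filter.mp hS).2 h, pow_add]
  · refine sum_congr (filter_congr fun S _ => ?_) fun _ _ => rfl
    rw [range_add_one, insert_subset_iff, and_comm]

theorem subsetPoly_eq_R (n k : ℕ) : subsetPoly n k = R n k := by
  rw [R]
  split_ifs with h h0
  · exact subsetPoly_of_le h
  · subst h0
    rw [subsetPoly_succ (by omega), subsetPoly_eq_R (n - 1) 0, subsetPoly_eq_R n 1]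
    simp
  · rw [subsetPoly_succ (by omega), subsetPoly_eq_R (n - 1) k, subsetPoly_eq_R n (k + 1)]
termination_by (n, n - k)
decreasing_by
  all_goals first
    | exact Prod.Lex.left _ _ (by omega)
    | exact Prod.Lex.right' _ (by omega) (by omega)

lemma sum_avoiders_eq_subsetPoly {n k : ℕ} (hk : k ≤ n) :
    (∑ σ ∈ univ.filter (fun σ : Equiv.Perm (Fin n) => (Avoids σ p213 ∧ Avoids σ p312) ∧
        ∀ i : Fin n, (i : ℕ) < k → σ (Fin.rev i) = i),
      (X : ℤ[X]) ^ cr σ) = subsetPoly n k := by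
  simp only [avoids_p213_and_avoids_p312_iff]
  refine sum_bij' (fun σ _ => nonLRMaxima σ)
    (fun S hS => unimodalPerm n S (mem_powerset.mp (mem_filter.mp hS).1)) ?_ ?_ ?_ ?_ ?_
  · intro σ hσ
    obtain ⟨hσ, htail⟩ := (mem_filter.mp hσ).2
    rw [eq_unimodalPerm_nonLRMaxima hσ, unimodalPerm_rev_eq_self_iff _ hk] at htail
    exact mem_filter.mpr ⟨mem_powerset.mpr (nonLRMaxima_subset σ), htail⟩
  · intro S hS
    exact mem_filter.mpr ⟨mem_univ _, unimodalPerm_noValley _,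
      (unimodalPerm_rev_eq_self_iff _ hk).mpr (mem_filter.mp hS).2⟩
  · intro σ hσ
    exact (eq_unimodalPerm_nonLRMaxima (mem_filter.mp hσ).2.1).symm
  · intro S _
    exact nonLRMaxima_unimodalPerm _
  · intro σ hσ
    conv_lhs => rw [eq_unimodalPerm_nonLRMaxima (mem_filter.mp hσ).2.1]
    rw [cr_unimodalPerm]

theorem stmt12 (n : ℕ) :
    (∑ σ ∈ Finset.univ.filter
          (fun σ : Equiv.Perm (Fin n) => Avoids σ p213 ∧ Avoids σ p312),
        (Polynomial.X : Polynomial ℤ) ^ cr σ) = R n 0 ∧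
    ∀ k : ℕ, 1 ≤ k → k ≤ n →
      (∑ σ ∈ Finset.univ.filter (fun σ : Equiv.Perm (Fin n) =>
            (Avoids σ p213 ∧ Avoids σ p312) ∧ ∀ i : Fin n, (i : ℕ) < k → σ (Fin.rev i) = i),
          (Polynomial.X : Polynomial ℤ) ^ cr σ) = R n k := by
  refine ⟨?_, fun k _ hk => by rw [sum_avoiders_eq_subsetPoly hk, subsetPoly_eq_R]⟩
  rw [← subsetPoly_eq_R, ← sum_avoiders_eq_subsetPoly (Nat.zero_le n)]
  simp only [Nat.not_lt_zero, IsEmpty.forall_iff, implies_true, and_true]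
end
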